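/- Let R be a commutative local ring with 2 invertible and V ∈ OUm_{2n,2m}(R) with m ≥ n+2, n ≥ 2. Let δ ∈ SO_{2n}(R) be orthogonal homotopic to the identity and let δ(T) ∈ SO_{2n}(R[T]) be a homotopy of δ. Then there exists σ(T) ∈ SO_{2m}(R[T]) with σ(0) = I_{2m} and σ(T)^{-1}(δ(T) ⊥ I_{2m-2n}) ∈ EO_{2m}(R[T]) such that δ(T)V = Vσ(T). -/

import Mathlib

open Matrix Polynomial

/-- The permutation `σ` of the indices `{0, …, 2m-1}` (0-indexed) pairing `2i ↔ 2i+1`. -/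
def sigmaPerm (m : ℕ) (i : Fin (2 * m)) : Fin (2 * m) :=
  if h : i.val % 2 = 0 then ⟨i.val + 1, by have := i.isLt; omega⟩
  else ⟨i.val - 1, by have := i.isLt; omega⟩

/-- The standard hyperbolic form `φ_m = φ_1 ⊥ ⋯ ⊥ φ_1`, where `φ_1 = [[0,1],[1,0]]`. -/
def phiMat (R : Type*) [CommRing R] (m : ℕ) : Matrix (Fin (2 * m)) (Fin (2 * m)) R :=
  Matrix.of fun i j =>
    if i.val % 2 = 0 ∧ j.val = i.val + 1 then 1
    else if j.val % 2 = 0 ∧ i.val = j.val + 1 then 1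
    else 0

/-- `A ∈ O_{2m}(R)`: `Aᵀ φ_m A = φ_m`. -/
def IsOrthogonalMat {R : Type*} [CommRing R] {m : ℕ}
    (A : Matrix (Fin (2 * m)) (Fin (2 * m)) R) : Prop :=
  Aᵀ * phiMat R m * A = phiMat R m

/-- The elementary orthogonal matrix `oe_ij(z) = I + z E_ij − z E_{σ(j) σ(i)}`. -/
def orthE {R : Type*} [CommRing R] (m : ℕ) (i j : Fin (2 * m)) (z : R) :
    Matrix (Fin (2 * m)) (Fin (2 * m)) R :=
  1 + Matrix.single i j z - Matrix.single (sigmaPerm m j) (sigmaPerm m i) z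

/-- `EOGroup R m` is the elementary orthogonal group `EO_{2m}(R)` generated by the matrices
`oe_ij(z)` for `i ≠ j`, `i ≠ σ(j)` (realised as the multiplicative closure; every
generator's inverse is again a generator). -/
def EOGroup (R : Type*) [CommRing R] (m : ℕ) :
    Submonoid (Matrix (Fin (2 * m)) (Fin (2 * m)) R) :=
  Submonoid.closure
    {A | ∃ (i j : Fin (2 * m)) (z : R), i ≠ j ∧ i ≠ sigmaPerm m j ∧ A = orthE m i j z}

/-- `matPerpId m A` is the block diagonal matrix `A ⊥ I` of size `m`, with the square
matrix `A` in the upper left corner and an identity block in the lower right corner. -/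
def matPerpId {R : Type*} [Zero R] [One R] {n : ℕ} (m : ℕ)
    (A : Matrix (Fin n) (Fin n) R) : Matrix (Fin m) (Fin m) R :=
  Matrix.of fun i j =>
    if hi : i.val < n then
      (if hj : j.val < n then A ⟨i.val, hi⟩ ⟨j.val, hj⟩ else 0)
    else (if i = j then 1 else 0)

/-!
Over a local ring in which `2` is a unit, right multiplication by `EO_{2m}(R)` brings every
`V ∈ OUm_{2n,2m}(R)` to the standard form `(I 0)`, two rows at a time: a column operation puts a
`1` on the diagonal, and a product of generators `oe_{k l}` clears the rest of the row. The
correction term this product picks up along `e_k e_{σk}ᵀ` is fixed by orthogonality, and it is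
exactly what the isotropy of the row needs.

If `V ε = (I 0)`, put `σ = ε (γ ⊥ I) ε⁻¹`. Then `γ V = V σ` because `(I 0)(γ ⊥ I) = γ (I 0)`, and
`σ(0) = 1` because `γ(0) = 1`. Finally `σ⁻¹ (γ ⊥ I) = ε ((γ ⊥ I)⁻¹ ε⁻¹ (γ ⊥ I))`, and conjugation
by `γ ⊥ I` maps each generator `oe_{ij}(z)` to an Eichler–Siegel–Dickson transvection `E(u, w)`.
Since `m ≥ n + 2`, there is a hyperbolic pair `e_p, e_{σp}` outside the `γ`-block on which `u`
and `w` vanish (or else `u = e_i`, `w = e_j`), and then `E(u, w)` is a commutator of the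
transvections `E(u, e_p)` and `E(e_p, w)`, which are products of generators.
-/

section SigmaPerm

variable {m : ℕ}

lemma sigmaPerm_val (i : Fin (2 * m)) :
    (sigmaPerm m i : ℕ) = if (i : ℕ) % 2 = 0 then (i : ℕ) + 1 else (i : ℕ) - 1 := by
  unfold sigmaPerm; split <;> rfl

lemma sigmaPerm_involutive : Function.Involutive (sigmaPerm m) := fun i => by
  ext; rw [sigmaPerm_val, sigmaPerm_val]; split <;> split <;> omega

@[simp] lemma sigmaPerm_sigmaPerm (i : Fin (2 * m)) : sigmaPerm m (sigmaPerm m i) = i :=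
  sigmaPerm_involutive i

lemma sigmaPerm_injective : Function.Injective (sigmaPerm m) := sigmaPerm_involutive.injective

lemma sigmaPerm_eq_comm {i j : Fin (2 * m)} : sigmaPerm m i = j ↔ i = sigmaPerm m j :=
  sigmaPerm_involutive.eq_iff

lemma eq_sigmaPerm_comm {i j : Fin (2 * m)} : i = sigmaPerm m j ↔ j = sigmaPerm m i := by
  rw [eq_comm, sigmaPerm_eq_comm]

lemma sigmaPerm_ne (i : Fin (2 * m)) : sigmaPerm m i ≠ i := fun h => by
  have := congrArg Fin.val h; rw [sigmaPerm_val] at this; split at this <;> omega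

lemma sigmaPerm_lt_iff {r : ℕ} (hr : r % 2 = 0) (i : Fin (2 * m)) :
    (sigmaPerm m i : ℕ) < r ↔ (i : ℕ) < r := by
  rw [sigmaPerm_val]; split <;> omega

lemma sigmaPerm_val_of_even {i : Fin (2 * m)} (h : (i : ℕ) % 2 = 0) :
    (sigmaPerm m i : ℕ) = i + 1 := by
  rw [sigmaPerm_val, if_pos h]

lemma sigmaPerm_mem_pair {t : ℕ} {k : Fin (2 * m)} (hk : 2 * t ≤ (k : ℕ))
    (hk' : (k : ℕ) < 2 * t + 2) :
    2 * t ≤ (sigmaPerm m k : ℕ) ∧ (sigmaPerm m k : ℕ) < 2 * t + 2 := by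
  rw [sigmaPerm_val]; split <;> omega

end SigmaPerm

section PhiMat

variable {R : Type*} [CommRing R] {m : ℕ}

lemma phiMat_apply (i j : Fin (2 * m)) :
    phiMat R m i j = if j = sigmaPerm m i then 1 else 0 := by
  have := i.isLt
  simp only [phiMat, of_apply, Fin.ext_iff, sigmaPerm_val]
  split_ifs <;> first | rfl | omega

lemma phiMat_transpose : (phiMat R m)ᵀ = phiMat R m := by
  ext i j; simp only [transpose_apply, phiMat_apply, eq_sigmaPerm_comm]

lemma phiMat_mul_apply {ι : Type*} [Fintype ι] (A : Matrix (Fin (2 * m)) ι R) (i : Fin (2 * m))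
    (j : ι) : (phiMat R m * A) i j = A (sigmaPerm m i) j := by
  simp [mul_apply, phiMat_apply]

lemma mul_phiMat_apply {ι : Type*} [Fintype ι] (A : Matrix ι (Fin (2 * m)) R) (i : ι)
    (j : Fin (2 * m)) : (A * phiMat R m) i j = A i (sigmaPerm m j) := by
  rw [← transpose_apply (A * _), transpose_mul, phiMat_transpose, phiMat_mul_apply,
    transpose_apply]

lemma phiMat_mul_self : phiMat R m * phiMat R m = 1 := by
  ext i j; simp [phiMat_mul_apply, phiMat_apply, one_apply, eq_comm]

lemma phiMat_mulVec_apply (u : Fin (2 * m) → R) (i : Fin (2 * m)) :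
    (phiMat R m *ᵥ u) i = u (sigmaPerm m i) := by
  simp [mulVec, dotProduct, phiMat_apply]

lemma phiMat_mulVec_single (i : Fin (2 * m)) :
    phiMat R m *ᵥ Pi.single i 1 = Pi.single (sigmaPerm m i) 1 := by
  ext k; simp only [phiMat_mulVec_apply, Pi.single_apply, sigmaPerm_eq_comm]

lemma phiMat_mulVec_phiMat_mulVec (u : Fin (2 * m) → R) :
    phiMat R m *ᵥ (phiMat R m *ᵥ u) = u := by
  rw [mulVec_mulVec, phiMat_mul_self, one_mulVec]

lemma phiMat_mulVec_dotProduct (u v : Fin (2 * m) → R) :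
    (phiMat R m *ᵥ u) ⬝ᵥ v = u ⬝ᵥ (phiMat R m *ᵥ v) := by
  simp only [dotProduct, phiMat_mulVec_apply]
  exact Fintype.sum_bijective _ sigmaPerm_involutive.bijective _ _ fun i => by simp [mul_comm]

lemma vecMul_phiMat (u : Fin (2 * m) → R) : u ᵥ* phiMat R m = phiMat R m *ᵥ u := by
  rw [← mulVec_transpose, phiMat_transpose]

end PhiMat

section Orthogonal

variable {R : Type*} [CommRing R] {m : ℕ} {β γ : Matrix (Fin (2 * m)) (Fin (2 * m)) R}

lemma isOrthogonalMat_one : IsOrthogonalMat (1 : Matrix (Fin (2 * m)) (Fin (2 * m)) R) := by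
  simp [IsOrthogonalMat]

namespace IsOrthogonalMat

lemma mul (hβ : IsOrthogonalMat β) (hγ : IsOrthogonalMat γ) : IsOrthogonalMat (β * γ) := by
  unfold IsOrthogonalMat at *
  calc (β * γ)ᵀ * phiMat R m * (β * γ) = γᵀ * (βᵀ * phiMat R m * β) * γ := by
        simp only [transpose_mul, Matrix.mul_assoc]
    _ = phiMat R m := by rw [hβ, hγ]

lemma phiMat_mul_transpose_mul_phiMat_mul (h : IsOrthogonalMat β) :
    phiMat R m * βᵀ * phiMat R m * β = 1 := by
  rw [Matrix.mul_assoc, Matrix.mul_assoc, ← Matrix.mul_assoc βᵀ, h, phiMat_mul_self]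

lemma inv_eq (h : IsOrthogonalMat β) : β⁻¹ = phiMat R m * βᵀ * phiMat R m :=
  inv_eq_left_inv h.phiMat_mul_transpose_mul_phiMat_mul

lemma inv_mul_cancel (h : IsOrthogonalMat β) : β⁻¹ * β = 1 := by
  rw [h.inv_eq, h.phiMat_mul_transpose_mul_phiMat_mul]

lemma mul_inv_cancel (h : IsOrthogonalMat β) : β * β⁻¹ = 1 :=
  mul_eq_one_comm.mp h.inv_mul_cancel

lemma inv_mul_phiMat (h : IsOrthogonalMat β) : β⁻¹ * phiMat R m = phiMat R m * βᵀ := by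
  rw [h.inv_eq, Matrix.mul_assoc, phiMat_mul_self, Matrix.mul_one]

lemma phiMat_mul_inv (h : IsOrthogonalMat β) : phiMat R m * β⁻¹ = βᵀ * phiMat R m := by
  rw [h.inv_eq, ← Matrix.mul_assoc, ← Matrix.mul_assoc, phiMat_mul_self, Matrix.one_mul]

lemma mul_phiMat_mul_transpose (h : IsOrthogonalMat β) : β * phiMat R m * βᵀ = phiMat R m := by
  rw [Matrix.mul_assoc, ← h.inv_mul_phiMat, ← Matrix.mul_assoc, h.mul_inv_cancel,
    Matrix.one_mul]

lemma transpose (h : IsOrthogonalMat β) : IsOrthogonalMat βᵀ := by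
  rw [IsOrthogonalMat, transpose_transpose, h.mul_phiMat_mul_transpose]

lemma inv (h : IsOrthogonalMat β) : IsOrthogonalMat β⁻¹ := by
  set φ := phiMat R m
  rw [IsOrthogonalMat, h.inv_eq]
  simp only [transpose_mul, phiMat_transpose, transpose_transpose]
  calc φ * (β * φ) * φ * (φ * βᵀ * φ) = φ * (β * (φ * φ) * φ * βᵀ) * φ := by
        simp only [Matrix.mul_assoc]
    _ = φ := by
        rw [phiMat_mul_self, Matrix.mul_one, h.mul_phiMat_mul_transpose, phiMat_mul_self,
          Matrix.one_mul]

lemma mulVec_dotProduct_phiMat_mulVec (h : IsOrthogonalMat β) (x y : Fin (2 * m) → R) :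
    (β *ᵥ x) ⬝ᵥ (phiMat R m *ᵥ (β *ᵥ y)) = x ⬝ᵥ (phiMat R m *ᵥ y) := by
  rw [mulVec_mulVec, dotProduct_comm, dotProduct_mulVec, ← mulVec_transpose, mulVec_mulVec,
    ← Matrix.mul_assoc, h, dotProduct_comm]

lemma map_inv {S : Type*} [CommRing S] (f : R →+* S) (h : IsOrthogonalMat β) :
    (β.map f)⁻¹ = β⁻¹.map f :=
  inv_eq_right_inv (by
    rw [← Matrix.map_mul, h.mul_inv_cancel, Matrix.map_one _ f.map_zero f.map_one])

end IsOrthogonalMat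

end Orthogonal

section Transvection

variable {R : Type*} [CommRing R] {m : ℕ}

lemma vecMulVec_mul_vecMulVec' {ι : Type*} [Fintype ι]
    (a b c d : ι → R) : vecMulVec a b * vecMulVec c d = (b ⬝ᵥ c) • vecMulVec a d := by
  rw [vecMulVec_mul_vecMulVec, vecMulVec_smul]

/-- The Eichler–Siegel–Dickson transvection. -/
def esdTransvection (u w : Fin (2 * m) → R) (z : R) : Matrix (Fin (2 * m)) (Fin (2 * m)) R :=
  1 + z • vecMulVec u w - z • vecMulVec (phiMat R m *ᵥ w) (phiMat R m *ᵥ u)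

lemma orthE_eq_esdTransvection (i j : Fin (2 * m)) (z : R) :
    orthE m i j z = esdTransvection (Pi.single i 1) (Pi.single j 1) z := by
  have single_eq (a b : Fin (2 * m)) :
      single a b z = z • vecMulVec (Pi.single a 1) (Pi.single b 1) := by
    rw [← single_eq_single_vecMulVec_single, smul_single, smul_eq_mul, mul_one]
  simp only [orthE, esdTransvection, phiMat_mulVec_single, single_eq]

lemma esdTransvection_transpose (u w : Fin (2 * m) → R) (z : R) :
    (esdTransvection u w z)ᵀ = esdTransvection w u z := by
  simp [esdTransvection, transpose_vecMulVec]

variable {u w : Fin (2 * m) → R}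

/-- The conditions under which `esdTransvection u w z` is an orthogonal transvection. -/
structure IsEsdPair (u w : Fin (2 * m) → R) : Prop where
  dotProduct_eq_zero : w ⬝ᵥ u = 0
  isotropic_left : u ⬝ᵥ (phiMat R m *ᵥ u) = 0
  isotropic_right : w ⬝ᵥ (phiMat R m *ᵥ w) = 0

lemma esdTransvection_sub_one (u w : Fin (2 * m) → R) (z : R) :
    esdTransvection u w z - 1
      = z • vecMulVec u w - z • vecMulVec (phiMat R m *ᵥ w) (phiMat R m *ᵥ u) := by
  rw [esdTransvection]; abel

lemma esdTransvection_sub_one_transpose_mul_phiMat (u w : Fin (2 * m) → R) (z : R) :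
    (esdTransvection u w z - 1)ᵀ * phiMat R m = -(phiMat R m * (esdTransvection u w z - 1)) := by
  simp only [esdTransvection_sub_one, transpose_sub, transpose_smul,
    transpose_vecMulVec, Matrix.sub_mul, Matrix.mul_sub, Matrix.smul_mul, Matrix.mul_smul,
    vecMulVec_mul, mul_vecMulVec, vecMul_phiMat, phiMat_mulVec_phiMat_mulVec]
  abel

lemma isOrthogonalMat_one_add {X : Matrix (Fin (2 * m)) (Fin (2 * m)) R}
    (hX : Xᵀ * phiMat R m = -(phiMat R m * X)) (hXX : X * X = 0) : IsOrthogonalMat (1 + X) := by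
  rw [IsOrthogonalMat]
  calc (1 + X)ᵀ * phiMat R m * (1 + X)
      = phiMat R m + (Xᵀ * phiMat R m + phiMat R m * X) + Xᵀ * phiMat R m * X := by
        simp only [transpose_add, transpose_one]; noncomm_ring
    _ = phiMat R m := by rw [hX, neg_mul, Matrix.mul_assoc, hXX]; simp

namespace IsEsdPair

lemma sub_one_mul_sub_one (h : IsEsdPair u w) (z z' : R) :
    (esdTransvection u w z - 1) * (esdTransvection u w z' - 1) = 0 := by
  have h₁ : (phiMat R m *ᵥ u) ⬝ᵥ u = 0 := by rw [phiMat_mulVec_dotProduct, h.isotropic_left]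
  have h₂ : (phiMat R m *ᵥ u) ⬝ᵥ (phiMat R m *ᵥ w) = 0 := by
    rw [phiMat_mulVec_dotProduct, phiMat_mulVec_phiMat_mulVec, dotProduct_comm,
      h.dotProduct_eq_zero]
  simp only [esdTransvection_sub_one, Matrix.sub_mul, Matrix.mul_sub, Matrix.smul_mul,
    Matrix.mul_smul, vecMulVec_mul_vecMulVec', h.dotProduct_eq_zero, h.isotropic_right, h₁, h₂,
    zero_smul, smul_zero, sub_zero]

lemma isOrthogonalMat (h : IsEsdPair u w) (z : R) : IsOrthogonalMat (esdTransvection u w z) := by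
  simpa using isOrthogonalMat_one_add (esdTransvection_sub_one_transpose_mul_phiMat u w z)
    (h.sub_one_mul_sub_one z z)

lemma mul_neg (h : IsEsdPair u w) (z : R) :
    esdTransvection u w z * esdTransvection u w (-z) = 1 := by
  have hneg : esdTransvection u w (-z) - 1 = -(esdTransvection u w z - 1) := by
    simp only [esdTransvection_sub_one, neg_smul, sub_neg_eq_add]; abel
  have := h.sub_one_mul_sub_one z (-z)
  rw [hneg] at this
  calc esdTransvection u w z * esdTransvection u w (-z)
      = 1 + (esdTransvection u w z - 1) + (esdTransvection u w (-z) - 1)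
        + (esdTransvection u w z - 1) * (esdTransvection u w (-z) - 1) := by noncomm_ring
    _ = 1 := by rw [hneg, this]; abel

end IsEsdPair

lemma isEsdPair_single {i j : Fin (2 * m)} (hij : i ≠ j) :
    IsEsdPair (Pi.single i (1 : R)) (Pi.single j 1) where
  dotProduct_eq_zero := by simp [hij]
  isotropic_left := by simp [phiMat_apply, Ne.symm (sigmaPerm_ne i)]
  isotropic_right := by simp [phiMat_apply, Ne.symm (sigmaPerm_ne j)]

variable {β : Matrix (Fin (2 * m)) (Fin (2 * m)) R}

lemma IsOrthogonalMat.inv_mul_esdTransvection_mul (hβ : IsOrthogonalMat β) (u w) (z : R) :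
    β⁻¹ * esdTransvection u w z * β = esdTransvection (β⁻¹ *ᵥ u) (βᵀ *ᵥ w) z := by
  simp only [esdTransvection, Matrix.mul_add, Matrix.add_mul, Matrix.mul_sub, Matrix.sub_mul,
    Matrix.mul_one, hβ.inv_mul_cancel, Matrix.smul_mul, Matrix.mul_smul, mul_vecMulVec,
    vecMulVec_mul, ← mulVec_transpose, mulVec_mulVec, hβ.inv_mul_phiMat, ← hβ.phiMat_mul_inv]

lemma IsOrthogonalMat.isEsdPair (hβ : IsOrthogonalMat β) (h : IsEsdPair u w) :
    IsEsdPair (β⁻¹ *ᵥ u) (βᵀ *ᵥ w) where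
  dotProduct_eq_zero := by
    rw [dotProduct_comm, dotProduct_transpose_mulVec, mulVec_mulVec, hβ.mul_inv_cancel,
      one_mulVec, h.dotProduct_eq_zero]
  isotropic_left := by
    rw [hβ.inv.mulVec_dotProduct_phiMat_mulVec, h.isotropic_left]
  isotropic_right := by
    rw [hβ.transpose.mulVec_dotProduct_phiMat_mulVec, h.isotropic_right]

end Transvection

section ElementaryOrthogonal

variable {R : Type*} [CommRing R] {m : ℕ} {α : Matrix (Fin (2 * m)) (Fin (2 * m)) R}

lemma orthE_transpose (i j : Fin (2 * m)) (z : R) : (orthE m i j z)ᵀ = orthE m j i z := by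
  rw [orthE_eq_esdTransvection, esdTransvection_transpose, orthE_eq_esdTransvection]

lemma orthE_map {S : Type*} [CommRing S] (f : R →+* S) (i j : Fin (2 * m)) (z : R) :
    (orthE m i j z).map f = orthE m i j (f z) := by
  ext a b; simp [orthE, single, one_apply, apply_ite f]

namespace EOGroup

lemma orthE_mem {i j : Fin (2 * m)} (hij : i ≠ j) (hiσj : i ≠ sigmaPerm m j) (z : R) :
    orthE m i j z ∈ EOGroup R m :=
  Submonoid.subset_closure ⟨i, j, z, hij, hiσj, rfl⟩

lemma isOrthogonalMat (h : α ∈ EOGroup R m) : IsOrthogonalMat α := by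
  induction h using Submonoid.closure_induction with
  | mem x hx =>
    obtain ⟨i, j, z, hij, -, rfl⟩ := hx
    rw [orthE_eq_esdTransvection]
    exact (isEsdPair_single hij).isOrthogonalMat z
  | one => exact isOrthogonalMat_one
  | mul x y _ _ hx hy => exact hx.mul hy

lemma inv_mem (h : α ∈ EOGroup R m) : α⁻¹ ∈ EOGroup R m := by
  induction h using Submonoid.closure_induction with
  | mem x hx =>
    obtain ⟨i, j, z, hij, hiσj, rfl⟩ := hx
    have hinv : orthE m i j z * orthE m i j (-z) = 1 := by
      simp only [orthE_eq_esdTransvection, (isEsdPair_single hij).mul_neg]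
    rw [inv_eq_right_inv hinv]
    exact orthE_mem hij hiσj (-z)
  | one => rw [inv_one]; exact one_mem _
  | mul x y _ _ hx hy => rw [Matrix.mul_inv_rev]; exact mul_mem hy hx

lemma transpose_mem (h : α ∈ EOGroup R m) : αᵀ ∈ EOGroup R m := by
  induction h using Submonoid.closure_induction with
  | mem x hx =>
    obtain ⟨i, j, z, hij, hiσj, rfl⟩ := hx
    rw [orthE_transpose]
    exact orthE_mem hij.symm (eq_sigmaPerm_comm.not.mp hiσj) z
  | one => rw [transpose_one]; exact one_mem _
  | mul x y _ _ hx hy => rw [transpose_mul]; exact mul_mem hy hx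

lemma map_mem {S : Type*} [CommRing S] (f : R →+* S) (h : α ∈ EOGroup R m) :
    α.map f ∈ EOGroup S m := by
  induction h using Submonoid.closure_induction with
  | mem x hx =>
    obtain ⟨i, j, z, hij, hiσj, rfl⟩ := hx
    rw [orthE_map]
    exact orthE_mem hij hiσj (f z)
  | one => rw [Matrix.map_one _ f.map_zero f.map_one]; exact one_mem _
  | mul x y _ _ hx hy => rw [Matrix.map_mul]; exact mul_mem hx hy

end EOGroup

end ElementaryOrthogonal

section TransvectionsInEO

variable {R : Type*} [CommRing R] {m : ℕ} {u w w' : Fin (2 * m) → R}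

lemma esdTransvection_smul_right (u w : Fin (2 * m) → R) (z : R) :
    esdTransvection u (z • w) 1 = esdTransvection u w z := by
  simp [esdTransvection, mulVec_smul, smul_vecMulVec]

lemma esdTransvection_zero_right (u : Fin (2 * m) → R) :
    esdTransvection u 0 1 = 1 := by
  simp [esdTransvection]

lemma esdTransvection_sub_mul_esdTransvection (hu : u ⬝ᵥ (phiMat R m *ᵥ u) = 0)
    (hw : w ⬝ᵥ u = 0) (hw' : w' ⬝ᵥ u = 0) (c : R) :
    (esdTransvection u w 1 - c • vecMulVec u (phiMat R m *ᵥ u)) * esdTransvection u w' 1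
      = esdTransvection u (w + w') 1
        - (c + w ⬝ᵥ (phiMat R m *ᵥ w')) • vecMulVec u (phiMat R m *ᵥ u) := by
  have h₁ : (phiMat R m *ᵥ u) ⬝ᵥ u = 0 := by rw [phiMat_mulVec_dotProduct, hu]
  have h₂ : (phiMat R m *ᵥ u) ⬝ᵥ (phiMat R m *ᵥ w') = 0 := by
    rw [phiMat_mulVec_dotProduct, phiMat_mulVec_phiMat_mulVec, dotProduct_comm, hw']
  simp only [esdTransvection, one_smul, Matrix.add_mul, Matrix.sub_mul, Matrix.mul_add,
    Matrix.mul_sub, Matrix.one_mul, Matrix.mul_one, Matrix.smul_mul, vecMulVec_mul_vecMulVec',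
    hw, h₁, h₂, zero_smul, smul_zero, mulVec_add, vecMulVec_add, add_vecMulVec, add_smul]
  abel

lemma orthE_eq_esdTransvection_single (i j : Fin (2 * m)) (z : R) :
    orthE m i j z = esdTransvection (Pi.single i 1) (Pi.single j z) 1 := by
  rw [orthE_eq_esdTransvection, ← esdTransvection_smul_right, ← Pi.single_smul', smul_eq_mul,
    mul_one]

/-- The product `∏_{l ∉ {p, σp}} oe_{p l}(w l)` has this shape; `c` is then pinned down by
orthogonality (`two_mul_eq_of_isOrthogonalMat`). -/
lemma exists_esdTransvection_single_sub_mem (p : Fin (2 * m)) (hwp : w p = 0)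
    (hwσp : w (sigmaPerm m p) = 0) :
    ∃ c : R, esdTransvection (Pi.single p 1) w 1
      - c • vecMulVec (Pi.single p 1) (Pi.single (sigmaPerm m p) 1) ∈ EOGroup R m := by
  have hu : Pi.single p (1 : R) ⬝ᵥ (phiMat R m *ᵥ Pi.single p 1) = 0 := by
    simp [phiMat_apply, Ne.symm (sigmaPerm_ne p)]
  have hvp (S : Finset (Fin (2 * m))) :
      (fun l => if l ∈ S then w l else 0) ⬝ᵥ Pi.single p 1 = 0 := by
    simp [hwp]
  suffices ∀ S : Finset (Fin (2 * m)), ∃ c : R,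
      esdTransvection (Pi.single p 1) (fun l => if l ∈ S then w l else 0) 1
        - c • vecMulVec (Pi.single p 1) (phiMat R m *ᵥ Pi.single p 1) ∈ EOGroup R m by
    simpa only [Finset.mem_univ, if_true, phiMat_mulVec_single] using this Finset.univ
  intro S
  induction S using Finset.induction_on with
  | empty =>
    have h0 : (fun l => if l ∈ (∅ : Finset (Fin (2 * m))) then w l else 0) = 0 := by ext; simp
    exact ⟨0, by rw [h0, esdTransvection_zero_right, zero_smul, sub_zero]; exact one_mem _⟩
  | insert a S ha ih =>
    obtain ⟨c, hc⟩ := ih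
    have hsplit : (fun l => if l ∈ insert a S then w l else 0)
        = (fun l => if l ∈ S then w l else 0) + Pi.single a (w a) := by
      ext l; by_cases hl : l = a <;> simp [hl, ha]
    by_cases hap : a = p ∨ a = sigmaPerm m p
    · have hwa : w a = 0 := by rcases hap with rfl | rfl <;> assumption
      exact ⟨c, by rwa [hsplit, hwa, Pi.single_zero, add_zero]⟩
    · rw [not_or] at hap
      have hstep := esdTransvection_sub_mul_esdTransvection hu (hvp S)
        (w' := Pi.single a (w a)) (by simp [hap.1]) c
      have hgen : esdTransvection (Pi.single p 1) (Pi.single a (w a)) 1 ∈ EOGroup R m := by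
        rw [← orthE_eq_esdTransvection_single]
        exact EOGroup.orthE_mem (Ne.symm hap.1) (fun h => hap.2 (sigmaPerm_eq_comm.mpr h).symm) _
      exact ⟨_, hsplit ▸ hstep ▸ mul_mem hc hgen⟩

lemma two_mul_eq_of_isOrthogonalMat {p : Fin (2 * m)} (hwp : w p = 0)
    (hwσp : w (sigmaPerm m p) = 0) {c : R}
    (h : IsOrthogonalMat (esdTransvection (Pi.single p 1) w 1
      - c • vecMulVec (Pi.single p 1) (Pi.single (sigmaPerm m p) 1))) :
    2 * c = w ⬝ᵥ (phiMat R m *ᵥ w) := by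
  -- The image `e_{σp} - φ w - c e_p` of `e_{σp}` has `q = q(w) - 2c`, while `q(e_{σp}) = 0`.
  have hG : (esdTransvection (Pi.single p 1) w 1
      - c • vecMulVec (Pi.single p 1) (Pi.single (sigmaPerm m p) 1)) *ᵥ Pi.single (sigmaPerm m p) 1
      = Pi.single (sigmaPerm m p) 1 - phiMat R m *ᵥ w - c • Pi.single p 1 := by
    simp only [esdTransvection, one_smul, sub_mulVec, add_mulVec, one_mulVec, smul_mulVec,
      vecMulVec_mulVec, phiMat_mulVec_single, dotProduct_single_one, Pi.single_eq_same, hwσp,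
      MulOpposite.op_zero, MulOpposite.op_one, zero_smul, one_smul, add_zero]
  have := h.mulVec_dotProduct_phiMat_mulVec (Pi.single (sigmaPerm m p) 1)
    (Pi.single (sigmaPerm m p) 1)
  rw [hG] at this
  simp only [mulVec_sub, mulVec_smul, dotProduct_sub, sub_dotProduct, smul_dotProduct,
    dotProduct_smul, phiMat_mulVec_single, phiMat_mulVec_phiMat_mulVec, phiMat_mulVec_dotProduct,
    dotProduct_single_one, single_one_dotProduct, phiMat_mulVec_apply, sigmaPerm_sigmaPerm,
    Pi.single_eq_same, Pi.single_eq_of_ne (sigmaPerm_ne p),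
    Pi.single_eq_of_ne (sigmaPerm_ne p).symm, Pi.sub_apply, Pi.smul_apply, hwp, hwσp,
    smul_eq_mul] at this
  linear_combination -this

lemma esdTransvection_single_left_mem (h2 : IsUnit (2 : R)) {p : Fin (2 * m)} (hwp : w p = 0)
    (hwσp : w (sigmaPerm m p) = 0) (hw : w ⬝ᵥ (phiMat R m *ᵥ w) = 0) (z : R) :
    esdTransvection (Pi.single p 1) w z ∈ EOGroup R m := by
  have hzwp : (z • w) p = 0 := by simp [hwp]
  have hzwσp : (z • w) (sigmaPerm m p) = 0 := by simp [hwσp]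
  obtain ⟨c, hc⟩ := exists_esdTransvection_single_sub_mem p hzwp hzwσp
  have h2c : 2 * c = 0 := by
    rw [two_mul_eq_of_isOrthogonalMat hzwp hzwσp (EOGroup.isOrthogonalMat hc), mulVec_smul,
      smul_dotProduct, dotProduct_smul, hw, smul_zero, smul_zero]
  rwa [h2.mul_right_eq_zero.mp h2c, zero_smul, sub_zero, esdTransvection_smul_right] at hc

lemma esdTransvection_eq_commutator {p : Fin (2 * m)} (hup : u p = 0)
    (huσp : u (sigmaPerm m p) = 0) (hwp : w p = 0) (hwσp : w (sigmaPerm m p) = 0)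
    (h : IsEsdPair u w) (z : R) :
    esdTransvection u w z
      = esdTransvection u (Pi.single p 1) z * esdTransvection (Pi.single p 1) w 1
        * esdTransvection u (Pi.single p 1) (-z) * esdTransvection (Pi.single p 1) w (-1) := by
  have hpσp : p ≠ sigmaPerm m p := (sigmaPerm_ne p).symm
  have h₁ : (phiMat R m *ᵥ u) ⬝ᵥ u = 0 := by rw [phiMat_mulVec_dotProduct, h.isotropic_left]
  have h₂ : (phiMat R m *ᵥ u) ⬝ᵥ (phiMat R m *ᵥ w) = 0 := by
    rw [phiMat_mulVec_dotProduct, phiMat_mulVec_phiMat_mulVec, dotProduct_comm,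
      h.dotProduct_eq_zero]
  simp only [esdTransvection, phiMat_mulVec_single, Matrix.mul_add, Matrix.add_mul,
    Matrix.mul_sub, Matrix.sub_mul, Matrix.one_mul, Matrix.mul_one, Matrix.smul_mul,
    Matrix.mul_smul, vecMulVec_mul_vecMulVec', single_one_dotProduct, dotProduct_single_one,
    phiMat_mulVec_apply, sigmaPerm_sigmaPerm, Pi.single_eq_same, Pi.single_eq_of_ne hpσp,
    Pi.single_eq_of_ne hpσp.symm, hup, huσp, hwp, hwσp, h₁, h₂, h.dotProduct_eq_zero,
    h.isotropic_right, zero_smul, smul_zero, one_smul, Matrix.zero_mul]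
  module

lemma esdTransvection_mem (h2 : IsUnit (2 : R)) {p : Fin (2 * m)} (hup : u p = 0)
    (huσp : u (sigmaPerm m p) = 0) (hwp : w p = 0) (hwσp : w (sigmaPerm m p) = 0)
    (h : IsEsdPair u w) (z : R) : esdTransvection u w z ∈ EOGroup R m := by
  have hleft (z' : R) : esdTransvection u (Pi.single p 1) z' ∈ EOGroup R m := by
    rw [← esdTransvection_transpose]
    exact EOGroup.transpose_mem (esdTransvection_single_left_mem h2 hup huσp h.isotropic_left z')
  have hright (z' : R) : esdTransvection (Pi.single p 1) w z' ∈ EOGroup R m :=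
    esdTransvection_single_left_mem h2 hwp hwσp h.isotropic_right z'
  rw [esdTransvection_eq_commutator hup huσp hwp hwσp h z]
  exact mul_mem (mul_mem (mul_mem (hleft z) (hright 1)) (hleft (-z))) (hright (-1))

end TransvectionsInEO

section PerpId

variable {R : Type*} [CommRing R] {k N : ℕ}

lemma matPerpId_apply_of_lt (A : Matrix (Fin k) (Fin k) R) {i j : Fin N} (hi : (i : ℕ) < k)
    (hj : (j : ℕ) < k) : matPerpId N A i j = A ⟨i, hi⟩ ⟨j, hj⟩ := by
  simp [matPerpId, hi, hj]

lemma matPerpId_apply_of_le (A : Matrix (Fin k) (Fin k) R) {i j : Fin N}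
    (h : k ≤ (i : ℕ) ∨ k ≤ (j : ℕ)) : matPerpId N A i j = if i = j then 1 else 0 := by
  by_cases hi : (i : ℕ) < k
  · have hj : ¬ (j : ℕ) < k := by omega
    have hij : i ≠ j := fun e => hj (e ▸ hi)
    simp [matPerpId, hi, hj, hij]
  · simp [matPerpId, hi]

def finSumEquivOfAdd {d : ℕ} (h : k + d = N) : Fin k ⊕ Fin d ≃ Fin N :=
  finSumFinEquiv.trans (finCongr h)

lemma matPerpId_eq_reindex {d : ℕ} (h : k + d = N) (A : Matrix (Fin k) (Fin k) R) :
    matPerpId N A = reindex (finSumEquivOfAdd h) (finSumEquivOfAdd h) (fromBlocks A 0 0 1) := by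
  ext i j
  obtain ⟨i, rfl⟩ := (finSumEquivOfAdd h).surjective i
  obtain ⟨j, rfl⟩ := (finSumEquivOfAdd h).surjective j
  rcases i with i | i <;> rcases j with j | j <;>
    simp [matPerpId, finSumEquivOfAdd, one_apply, Fin.ext_iff]
  omega

lemma det_matPerpId (h : k ≤ N) (A : Matrix (Fin k) (Fin k) R) : (matPerpId N A).det = A.det := by
  rw [matPerpId_eq_reindex (Nat.add_sub_of_le h), det_reindex_self, det_fromBlocks_zero₂₁,
    det_one, mul_one]

lemma matPerpId_map {S : Type*} [CommRing S] (f : R →+* S) (A : Matrix (Fin k) (Fin k) R) :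
    (matPerpId N A).map f = matPerpId N (A.map f) := by
  ext i j; simp only [map_apply, matPerpId, of_apply]; split_ifs <;> simp

lemma matPerpId_one (h : k ≤ N) : matPerpId N (1 : Matrix (Fin k) (Fin k) R) = 1 := by
  rw [matPerpId_eq_reindex (Nat.add_sub_of_le h), fromBlocks_one, reindex_apply,
    submatrix_one_equiv]

variable {n m : ℕ}

lemma phiMat_eq_reindex (h : n ≤ m) :
    phiMat R m = reindex (finSumEquivOfAdd (by omega : 2 * n + 2 * (m - n) = 2 * m))
      (finSumEquivOfAdd (by omega)) (fromBlocks (phiMat R n) 0 0 (phiMat R (m - n))) := by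
  ext i j
  obtain ⟨i, rfl⟩ := (finSumEquivOfAdd (by omega : 2 * n + 2 * (m - n) = 2 * m)).surjective i
  obtain ⟨j, rfl⟩ := (finSumEquivOfAdd (by omega : 2 * n + 2 * (m - n) = 2 * m)).surjective j
  rcases i with i | i <;> rcases j with j | j <;>
    simp [phiMat, finSumEquivOfAdd] <;> split_ifs <;> first | rfl | omega

lemma IsOrthogonalMat.matPerpId {γ : Matrix (Fin (2 * n)) (Fin (2 * n)) R} (h : n ≤ m)
    (hγ : IsOrthogonalMat γ) : IsOrthogonalMat (matPerpId (2 * m) γ) := by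
  rw [IsOrthogonalMat, matPerpId_eq_reindex (by omega : 2 * n + 2 * (m - n) = 2 * m),
    phiMat_eq_reindex h, reindex_apply, reindex_apply, transpose_submatrix, submatrix_mul_equiv,
    submatrix_mul_equiv, fromBlocks_transpose, fromBlocks_multiply, fromBlocks_multiply]
  simp only [transpose_zero, transpose_one, Matrix.mul_zero, Matrix.zero_mul, Matrix.mul_one,
    Matrix.one_mul, add_zero, zero_add]
  rw [hγ]

end PerpId

section Conjugation

variable {R : Type*} [CommRing R] {n m : ℕ} {γ : Matrix (Fin (2 * n)) (Fin (2 * n)) R}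

lemma exists_sigmaPair_avoiding (hnm : n + 2 ≤ m) {i j : Fin (2 * m)}
    (h : ¬ (2 * n ≤ (i : ℕ) ∧ 2 * n ≤ (j : ℕ))) :
    ∃ p : Fin (2 * m), 2 * n ≤ (p : ℕ) ∧
      p ≠ i ∧ sigmaPerm m p ≠ i ∧ p ≠ j ∧ sigmaPerm m p ≠ j := by
  obtain ⟨p, hp⟩ : ∃ p : ℕ, p = if (i : ℕ) / 2 = n ∨ (j : ℕ) / 2 = n then 2 * n + 2 else 2 * n :=
    ⟨_, rfl⟩
  have hpm : p < 2 * m := by split_ifs at hp <;> omega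
  have hpe : p % 2 = 0 := by split_ifs at hp <;> omega
  have hσp : (sigmaPerm m ⟨p, hpm⟩ : ℕ) = p + 1 := sigmaPerm_val_of_even hpe
  refine ⟨⟨p, hpm⟩, ?_⟩
  simp only [ne_eq, Fin.ext_iff, hσp]
  split_ifs at hp <;> omega

lemma inv_matPerpId_mulVec_single_apply (hnm : n ≤ m) (hγ : IsOrthogonalMat γ)
    {i q : Fin (2 * m)} (h : 2 * n ≤ (q : ℕ) ∨ 2 * n ≤ (i : ℕ)) :
    ((matPerpId (2 * m) γ)⁻¹ *ᵥ Pi.single i 1) q = (Pi.single i 1 : Fin (2 * m) → R) q := by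
  have hσ (x : Fin (2 * m)) : 2 * n ≤ (sigmaPerm m x : ℕ) ↔ 2 * n ≤ (x : ℕ) := by
    rw [← not_lt, ← not_lt, sigmaPerm_lt_iff (by omega)]
  rw [mulVec_single_one, (hγ.matPerpId hnm).inv_eq, col_apply, mul_phiMat_apply,
    phiMat_mul_apply, transpose_apply, matPerpId_apply_of_le _ (by rwa [hσ, hσ, or_comm])]
  simp [sigmaPerm_injective.eq_iff, Pi.single_apply, eq_comm]

lemma transpose_matPerpId_mulVec_single_apply {j q : Fin (2 * m)}
    (h : 2 * n ≤ (q : ℕ) ∨ 2 * n ≤ (j : ℕ)) :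
    ((matPerpId (2 * m) γ)ᵀ *ᵥ Pi.single j 1) q = (Pi.single j 1 : Fin (2 * m) → R) q := by
  rw [mulVec_single_one, col_apply, transpose_apply, matPerpId_apply_of_le _ (or_comm.mp h)]
  simp [Pi.single_apply, eq_comm]

lemma inv_matPerpId_mul_orthE_mul_mem (h2 : IsUnit (2 : R)) (hnm : n + 2 ≤ m)
    (hγ : IsOrthogonalMat γ) {i j : Fin (2 * m)} (hij : i ≠ j) (hiσj : i ≠ sigmaPerm m j)
    (z : R) : (matPerpId (2 * m) γ)⁻¹ * orthE m i j z * matPerpId (2 * m) γ ∈ EOGroup R m := by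
  have hβ := hγ.matPerpId (m := m) (by omega)
  have hu {q : Fin (2 * m)} (h : 2 * n ≤ (q : ℕ) ∨ 2 * n ≤ (i : ℕ)) :=
    inv_matPerpId_mulVec_single_apply (by omega) hγ h
  have hw {q : Fin (2 * m)} (h : 2 * n ≤ (q : ℕ) ∨ 2 * n ≤ (j : ℕ)) :=
    transpose_matPerpId_mulVec_single_apply (γ := γ) h
  rw [orthE_eq_esdTransvection, hβ.inv_mul_esdTransvection_mul]
  by_cases hout : 2 * n ≤ (i : ℕ) ∧ 2 * n ≤ (j : ℕ)
  · rw [funext fun q => hu (q := q) (Or.inr hout.1), funext fun q => hw (q := q) (Or.inr hout.2),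
      ← orthE_eq_esdTransvection]
    exact EOGroup.orthE_mem hij hiσj z
  · obtain ⟨p, hp, hpi, hσpi, hpj, hσpj⟩ := exists_sigmaPair_avoiding hnm hout
    have hσp : 2 * n ≤ (sigmaPerm m p : ℕ) := by
      rw [← not_lt, sigmaPerm_lt_iff (by omega)]; omega
    refine esdTransvection_mem h2 (p := p) ?_ ?_ ?_ ?_ (hβ.isEsdPair (isEsdPair_single hij)) z
    · rw [hu (Or.inl hp), Pi.single_eq_of_ne hpi]
    · rw [hu (Or.inl hσp), Pi.single_eq_of_ne hσpi]
    · rw [hw (Or.inl hp), Pi.single_eq_of_ne hpj]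
    · rw [hw (Or.inl hσp), Pi.single_eq_of_ne hσpj]

lemma inv_matPerpId_mul_mul_matPerpId_mem (h2 : IsUnit (2 : R)) (hnm : n + 2 ≤ m)
    (hγ : IsOrthogonalMat γ) {α : Matrix (Fin (2 * m)) (Fin (2 * m)) R}
    (hα : α ∈ EOGroup R m) :
    (matPerpId (2 * m) γ)⁻¹ * α * matPerpId (2 * m) γ ∈ EOGroup R m := by
  set β := matPerpId (2 * m) γ
  have hβ : IsOrthogonalMat β := hγ.matPerpId (by omega)
  induction hα using Submonoid.closure_induction with
  | mem x hx =>
    obtain ⟨i, j, z, hij, hiσj, rfl⟩ := hx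
    exact inv_matPerpId_mul_orthE_mul_mem h2 hnm hγ hij hiσj z
  | one => rw [Matrix.mul_one, hβ.inv_mul_cancel]; exact one_mem _
  | mul x y _ _ hx hy =>
    have hsplit : β⁻¹ * (x * y) * β = (β⁻¹ * x * β) * (β⁻¹ * y * β) := by
      calc β⁻¹ * (x * y) * β = β⁻¹ * x * (β * β⁻¹) * y * β := by
            rw [hβ.mul_inv_cancel, Matrix.mul_one]; simp only [Matrix.mul_assoc]
        _ = (β⁻¹ * x * β) * (β⁻¹ * y * β) := by simp only [Matrix.mul_assoc]
    rw [hsplit]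
    exact mul_mem hx hy

lemma inv_conj_matPerpId_mul_mem (h2 : IsUnit (2 : R)) (hnm : n + 2 ≤ m)
    (hγ : IsOrthogonalMat γ) {ε : Matrix (Fin (2 * m)) (Fin (2 * m)) R} (hε : ε ∈ EOGroup R m) :
    (ε * matPerpId (2 * m) γ * ε⁻¹)⁻¹ * matPerpId (2 * m) γ ∈ EOGroup R m := by
  rw [Matrix.mul_inv_rev, Matrix.mul_inv_rev,
    inv_eq_left_inv (EOGroup.isOrthogonalMat hε).mul_inv_cancel, Matrix.mul_assoc]
  exact mul_mem hε (inv_matPerpId_mul_mul_matPerpId_mem h2 hnm hγ (EOGroup.inv_mem hε))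

end Conjugation

section RowClearing

variable {R : Type*} [CommRing R] {m : ℕ}

lemma vecMul_esdTransvection (x u w : Fin (2 * m) → R) (z : R) :
    x ᵥ* esdTransvection u w z
      = x + (z * (x ⬝ᵥ u)) • w - (z * (x ⬝ᵥ (phiMat R m *ᵥ w))) • (phiMat R m *ᵥ u) := by
  simp only [esdTransvection, vecMul_add, vecMul_sub, vecMul_one, vecMul_smul, vecMul_vecMulVec,
    smul_smul]

lemma single_add_smul_single_sub_vecMul (h2 : IsUnit (2 : R)) {k : Fin (2 * m)}
    {w : Fin (2 * m) → R} (hwk : w k = 0) (hwσk : w (sigmaPerm m k) = 0) {c : R}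
    (hc : 2 * c = w ⬝ᵥ (phiMat R m *ᵥ w)) {a : R}
    (hq : (Pi.single k 1 + a • Pi.single (sigmaPerm m k) 1 - w)
      ⬝ᵥ (phiMat R m *ᵥ (Pi.single k 1 + a • Pi.single (sigmaPerm m k) 1 - w)) = 0) :
    (Pi.single k 1 + a • Pi.single (sigmaPerm m k) 1 - w)
      ᵥ* (esdTransvection (Pi.single k 1) w 1
        - c • vecMulVec (Pi.single k 1) (Pi.single (sigmaPerm m k) 1)) = Pi.single k 1 := by
  have hkσk : k ≠ sigmaPerm m k := (sigmaPerm_ne k).symm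
  have hxw : (Pi.single k 1 + a • Pi.single (sigmaPerm m k) 1 - w) ⬝ᵥ (phiMat R m *ᵥ w)
      = -(w ⬝ᵥ (phiMat R m *ᵥ w)) := by
    simp only [sub_dotProduct, add_dotProduct, smul_dotProduct, single_one_dotProduct,
      phiMat_mulVec_apply, sigmaPerm_sigmaPerm, hwk, hwσk, smul_zero, add_zero, zero_sub]
  have ha : a = -c := by
    refine h2.mul_left_cancel ?_
    simp only [mulVec_sub, mulVec_add, mulVec_smul, phiMat_mulVec_single, sub_dotProduct,
      add_dotProduct, smul_dotProduct, dotProduct_sub, dotProduct_add, dotProduct_smul,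
      single_one_dotProduct, dotProduct_single_one, phiMat_mulVec_apply, sigmaPerm_sigmaPerm,
      Pi.single_eq_same, Pi.single_eq_of_ne hkσk, Pi.single_eq_of_ne hkσk.symm, hwk, hwσk,
      Pi.sub_apply, Pi.add_apply, Pi.smul_apply, smul_eq_mul] at hq
    linear_combination hq + hc
  simp only [vecMul_sub, vecMul_smul, vecMul_esdTransvection, vecMul_vecMulVec, Pi.sub_apply,
    Pi.add_apply, Pi.smul_apply, dotProduct_single_one, Pi.single_eq_same, Pi.single_eq_of_ne hkσk,
    hwk, phiMat_mulVec_single, one_mul, mul_one, one_smul, hxw, smul_zero, add_zero, sub_zero]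
  rw [ha, ← hc]
  module

/-- `G = ∏_{l ≥ 2t+2} oe_{k l}(-x l)`, that is `E(e_k, w)` for the negated tail `w` of `x`,
corrected along `e_k e_{σk}ᵀ`. -/
lemma exists_mem_EOGroup_vecMul_eq_single (h2 : IsUnit (2 : R)) {t : ℕ} {k : Fin (2 * m)}
    (hk : 2 * t ≤ (k : ℕ)) (hk' : (k : ℕ) < 2 * t + 2) {x : Fin (2 * m) → R} (hxk : x k = 1)
    (hx : ∀ j : Fin (2 * m), (j : ℕ) < 2 * t → x j = 0) (hq : x ⬝ᵥ (phiMat R m *ᵥ x) = 0) :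
    ∃ G ∈ EOGroup R m, x ᵥ* G = Pi.single k 1 ∧
      ∀ y : Fin (2 * m) → R, y k = 0 → (∀ l : Fin (2 * m), 2 * t + 2 ≤ (l : ℕ) → y l = 0) →
        y ᵥ* G = y := by
  obtain ⟨hσk, hσk'⟩ := sigmaPerm_mem_pair hk hk'
  have hkσk : k ≠ sigmaPerm m k := (sigmaPerm_ne k).symm
  set w : Fin (2 * m) → R := fun l => if 2 * t + 2 ≤ (l : ℕ) then -x l else 0
  have hwk : w k = 0 := by simp [w]; omega
  have hwσk : w (sigmaPerm m k) = 0 := by simp [w]; omega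
  obtain ⟨c, hG⟩ := exists_esdTransvection_single_sub_mem k hwk hwσk
  have h2c := two_mul_eq_of_isOrthogonalMat hwk hwσk (EOGroup.isOrthogonalMat hG)
  have hyw (y : Fin (2 * m) → R) (hy : ∀ l : Fin (2 * m), 2 * t + 2 ≤ (l : ℕ) → y l = 0) :
      y ⬝ᵥ (phiMat R m *ᵥ w) = 0 := by
    refine Finset.sum_eq_zero fun j _ => ?_
    by_cases hj : 2 * t + 2 ≤ (j : ℕ)
    · rw [hy j hj, zero_mul]
    · have : ¬ 2 * t + 2 ≤ (sigmaPerm m j : ℕ) := by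
        rwa [not_le, sigmaPerm_lt_iff (by omega), ← not_le]
      simp [phiMat_mulVec_apply, w, this]
  refine ⟨_, hG, ?_, fun y hyk hy => ?_⟩
  · set a := x (sigmaPerm m k)
    have hx_eq : x = Pi.single k 1 + a • Pi.single (sigmaPerm m k) 1 - w := by
      ext j
      by_cases hj : 2 * t + 2 ≤ (j : ℕ)
      · have : j ≠ k ∧ j ≠ sigmaPerm m k := by constructor <;> rintro rfl <;> omega
        simp [w, hj, this.1, this.2]
      · by_cases hjk : j = k
        · subst hjk; simp [w, hj, hxk, hkσk]
        by_cases hjσk : j = sigmaPerm m k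
        · subst hjσk; simp [w, hj, a, hkσk.symm]
        · have : (j : ℕ) < 2 * t := by
            by_contra h
            have : (j : ℕ) = k ∨ (j : ℕ) = sigmaPerm m k := by omega
            exact this.elim (hjk ∘ Fin.ext) (hjσk ∘ Fin.ext)
          simp [w, hj, hjk, hjσk, hx j this]
    rw [hx_eq] at hq ⊢
    exact single_add_smul_single_sub_vecMul h2 hwk hwσk h2c hq
  · simp only [vecMul_sub, vecMul_smul, vecMul_esdTransvection, vecMul_vecMulVec,
      dotProduct_single_one, hyk, hyw y hy, mul_zero, zero_smul, smul_zero, add_zero, sub_zero]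

end RowClearing

section Reduction

variable {R : Type*} [CommRing R] {n m : ℕ}

lemma vecMul_orthE_apply (x : Fin (2 * m) → R) (k l j : Fin (2 * m)) (z : R) :
    (x ᵥ* orthE m k l z) j
      = x j + (if j = l then z * x k else 0)
        - (if j = sigmaPerm m k then z * x (sigmaPerm m l) else 0) := by
  simp only [orthE_eq_esdTransvection, vecMul_esdTransvection, phiMat_mulVec_single,
    dotProduct_single_one, mul_one, Pi.add_apply, Pi.sub_apply, Pi.smul_apply, Pi.single_apply,
    smul_eq_mul, mul_ite, mul_zero]

lemma vecMul_orthE_of_apply_eq_zero {x : Fin (2 * m) → R} {k l : Fin (2 * m)} (hk : x k = 0)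
    (hl : x (sigmaPerm m l) = 0) (z : R) : x ᵥ* orthE m k l z = x := by
  ext j; simp [vecMul_orthE_apply, hk, hl]

/-- `V ∈ OUm_{2n,2m}(R)`. -/
structure IsOUm (V : Matrix (Fin (2 * n)) (Fin (2 * m)) R) : Prop where
  exists_mul_eq_one : ∃ B : Matrix (Fin (2 * m)) (Fin (2 * n)) R, V * B = 1
  mul_phiMat_mul_transpose : V * phiMat R m * Vᵀ = phiMat R n

variable {V : Matrix (Fin (2 * n)) (Fin (2 * m)) R}

lemma IsOUm.mul_of_mem (hV : IsOUm V) {ε : Matrix (Fin (2 * m)) (Fin (2 * m)) R}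
    (hε : ε ∈ EOGroup R m) : IsOUm (V * ε) where
  exists_mul_eq_one := by
    obtain ⟨B, hB⟩ := hV.exists_mul_eq_one
    refine ⟨ε⁻¹ * B, ?_⟩
    rw [Matrix.mul_assoc, ← Matrix.mul_assoc ε, (EOGroup.isOrthogonalMat hε).mul_inv_cancel,
      Matrix.one_mul, hB]
  mul_phiMat_mul_transpose := by
    calc V * ε * phiMat R m * (V * ε)ᵀ = V * (ε * phiMat R m * εᵀ) * Vᵀ := by
          simp only [transpose_mul, Matrix.mul_assoc]
      _ = phiMat R n := by
          rw [(EOGroup.isOrthogonalMat hε).mul_phiMat_mul_transpose, hV.mul_phiMat_mul_transpose]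

lemma IsOUm.row_dotProduct_row (hV : IsOUm V) (r s : Fin (2 * n)) :
    V r ⬝ᵥ (phiMat R m *ᵥ V s) = phiMat R n r s := by
  rw [← hV.mul_phiMat_mul_transpose, ← phiMat_mulVec_dotProduct, ← vecMul_phiMat]
  rfl

/-- The matrix `(I_{2n} 0)`. -/
def stdRows (R : Type*) [CommRing R] (n m : ℕ) : Matrix (Fin (2 * n)) (Fin (2 * m)) R :=
  of fun i j => if (i : ℕ) = j then 1 else 0

lemma stdRows_apply (s : Fin (2 * n)) (j : Fin (2 * m)) :
    stdRows R n m s j = if (s : ℕ) = j then 1 else 0 := rfl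

lemma stdRows_row {s : Fin (2 * n)} (hs : (s : ℕ) < 2 * m) :
    stdRows R n m s = Pi.single ⟨s, hs⟩ 1 := by
  ext j; simp [stdRows, Pi.single_apply, Fin.ext_iff, eq_comm]

def FirstRowsStd (t : ℕ) (V : Matrix (Fin (2 * n)) (Fin (2 * m)) R) : Prop :=
  ∀ s : Fin (2 * n), (s : ℕ) < t → V s = stdRows R n m s

lemma FirstRowsStd.mul {t : ℕ} (hV : FirstRowsStd t V) {G : Matrix (Fin (2 * m)) (Fin (2 * m)) R}
    (hG : ∀ s : Fin (2 * n), (s : ℕ) < t → stdRows R n m s ᵥ* G = stdRows R n m s) :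
    FirstRowsStd t (V * G) := fun s hs => by
  rw [mul_apply_eq_vecMul, hV s hs, hG s hs]

lemma FirstRowsStd.mul_orthE {t : ℕ} (hV : FirstRowsStd (2 * t) V) {k l : Fin (2 * m)}
    (hk : 2 * t ≤ (k : ℕ)) (hl : 2 * t ≤ (l : ℕ)) (z : R) :
    FirstRowsStd (2 * t) (V * orthE m k l z) := by
  refine hV.mul fun s hs => vecMul_orthE_of_apply_eq_zero ?_ ?_ z
  · simp [stdRows]; omega
  · have : 2 * t ≤ (sigmaPerm m l : ℕ) := by
      rw [← not_lt, sigmaPerm_lt_iff (by omega)]; omega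
    simp [stdRows]; omega

lemma IsOUm.apply_eq_zero (hV : IsOUm V) {t : ℕ} (hstd : FirstRowsStd (2 * t) V)
    {r : Fin (2 * n)} (hr : 2 * t ≤ (r : ℕ)) {j : Fin (2 * m)} (hj : (j : ℕ) < 2 * t) :
    V r j = 0 := by
  have hσj : (sigmaPerm m j : ℕ) < 2 * t := by rwa [sigmaPerm_lt_iff (by omega)]
  have hσr : 2 * t ≤ (sigmaPerm n r : ℕ) := by rw [← not_lt, sigmaPerm_lt_iff (by omega)]; omega
  set s : Fin (2 * n) := ⟨sigmaPerm m j, by omega⟩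
  have hs : V s = Pi.single (sigmaPerm m j) 1 := by
    rw [hstd s hσj]; ext i; simp [stdRows, Pi.single_apply, Fin.ext_iff, eq_comm, s]
  have := hV.row_dotProduct_row r s
  rw [hs, phiMat_mulVec_single, dotProduct_single_one, sigmaPerm_sigmaPerm] at this
  rw [this, phiMat_apply, if_neg]
  intro h; have := congrArg Fin.val h; simp [s] at this; omega

lemma IsOUm.exists_isUnit [IsLocalRing R] (hV : IsOUm V) {t : ℕ} (hstd : FirstRowsStd (2 * t) V)
    {r : Fin (2 * n)} (hr : 2 * t ≤ (r : ℕ)) :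
    ∃ k : Fin (2 * m), 2 * t ≤ (k : ℕ) ∧ IsUnit (V r k) := by
  by_contra! hcon
  obtain ⟨B, hB⟩ := hV.exists_mul_eq_one
  have h1 : ∑ k, V r k * B k r = 1 := by rw [← mul_apply, hB, one_apply_eq]
  refine (IsLocalRing.maximalIdeal.isMaximal R).ne_top ((Ideal.eq_top_iff_one _).mpr ?_)
  rw [← h1]
  refine Ideal.sum_mem _ fun k _ => ?_
  by_cases hk : 2 * t ≤ (k : ℕ)
  · exact Ideal.mul_mem_right _ _ ((IsLocalRing.mem_maximalIdeal _).mpr (hcon k hk))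
  · rw [hV.apply_eq_zero hstd hr (not_le.mp hk), zero_mul]; exact Ideal.zero_mem _

lemma FirstRowsStd.mono {s t : ℕ} (hV : FirstRowsStd t V) (hst : s ≤ t) : FirstRowsStd s V :=
  fun i hi => hV i (by omega)

lemma IsOUm.row_isotropic (hV : IsOUm V) (r : Fin (2 * n)) : V r ⬝ᵥ (phiMat R m *ᵥ V r) = 0 := by
  rw [hV.row_dotProduct_row, phiMat_apply, if_neg (sigmaPerm_ne r).symm]

lemma exists_mul_orthE_apply_eq_one (W : Matrix (Fin (2 * n)) (Fin (2 * m)) R) (r : Fin (2 * n))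
    {k p : Fin (2 * m)} (hkσp : k ≠ sigmaPerm m p) (hu : IsUnit (W r k)) :
    ∃ z : R, (W * orthE m k p z) r p = 1 := by
  obtain ⟨b, hb⟩ := hu.exists_right_inv
  refine ⟨b * (1 - W r p), ?_⟩
  rw [mul_apply_eq_vecMul, vecMul_orthE_apply, if_pos rfl,
    if_neg (fun h => hkσp (sigmaPerm_eq_comm.mp h.symm))]
  linear_combination (1 - W r p) * hb

lemma FirstRowsStd.exists_mem_EOGroup_apply_eq_one {t : ℕ} (hV : FirstRowsStd (2 * t) V)
    (r : Fin (2 * n)) {k p : Fin (2 * m)} (hk : 2 * t ≤ (k : ℕ)) (hp : 2 * t ≤ (p : ℕ))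
    (hkp : k ≠ p) (hkσp : k ≠ sigmaPerm m p) (hu : IsUnit (V r k)) :
    ∃ ε ∈ EOGroup R m, FirstRowsStd (2 * t) (V * ε) ∧ (V * ε) r p = 1 := by
  obtain ⟨z, hz⟩ := exists_mul_orthE_apply_eq_one V r hkσp hu
  exact ⟨_, EOGroup.orthE_mem hkp hkσp z, hV.mul_orthE hk hp z, hz⟩

lemma IsOUm.exists_mem_EOGroup_apply_eq_one [IsLocalRing R] (hV : IsOUm V) {t : ℕ}
    (hstd : FirstRowsStd (2 * t) V) (htn : t < n) (hnm : n < m) :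
    ∃ ε ∈ EOGroup R m, FirstRowsStd (2 * t) (V * ε) ∧
      (V * ε) ⟨2 * t, by omega⟩ ⟨2 * t, by omega⟩ = 1 := by
  set r : Fin (2 * n) := ⟨2 * t, by omega⟩
  set p : Fin (2 * m) := ⟨2 * t, by omega⟩
  set q : Fin (2 * m) := ⟨2 * t + 2, by omega⟩
  have hσp : (sigmaPerm m p : ℕ) = 2 * t + 1 := sigmaPerm_val_of_even (by simp [p])
  have hσq : (sigmaPerm m q : ℕ) = 2 * t + 3 := sigmaPerm_val_of_even (by simp [q])
  obtain ⟨k, hk, hunit⟩ := hV.exists_isUnit hstd (r := r) le_rfl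
  by_cases hk2 : 2 * t + 2 ≤ (k : ℕ)
  · exact hstd.exists_mem_EOGroup_apply_eq_one r (p := p) hk le_rfl
      (Fin.ne_of_val_ne (by simp [p]; omega)) (Fin.ne_of_val_ne (by omega)) hunit
  · -- `oe_{k p}` is not a generator for `k ∈ {p, σ p}`: pass through column `2t + 2`
    obtain ⟨ε₁, hε₁, hstd₁, h₁⟩ := hstd.exists_mem_EOGroup_apply_eq_one r (p := q) hk
      (by simp [q])
      (Fin.ne_of_val_ne (by simp [q]; omega)) (Fin.ne_of_val_ne (by omega)) hunit
    obtain ⟨ε₂, hε₂, hstd₂, h₂⟩ := hstd₁.exists_mem_EOGroup_apply_eq_one r (k := q) (p := p)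
      (by simp [q]) le_rfl
      (Fin.ne_of_val_ne (by simp [p, q])) (Fin.ne_of_val_ne (by simp [q]; omega))
      (h₁ ▸ isUnit_one)
    rw [Matrix.mul_assoc] at hstd₂ h₂
    exact ⟨ε₁ * ε₂, mul_mem hε₁ hε₂, hstd₂, h₂⟩

lemma IsOUm.exists_firstRowsStd_succ (h2 : IsUnit (2 : R)) (hV : IsOUm V) {t s : ℕ}
    (hts : 2 * t ≤ s) (hst : s < 2 * t + 2) (hsn : s < 2 * n) (hsm : s < 2 * m)
    (hstd : FirstRowsStd s V) (hone : V ⟨s, hsn⟩ ⟨s, hsm⟩ = 1) :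
    ∃ G ∈ EOGroup R m, FirstRowsStd (s + 1) (V * G) := by
  obtain ⟨G, hG, hrow, hfix⟩ := exists_mem_EOGroup_vecMul_eq_single h2 (k := ⟨s, hsm⟩) hts hst
    hone (fun j hj => hV.apply_eq_zero (hstd.mono hts) hts hj) (hV.row_isotropic _)
  refine ⟨G, hG, fun i hi => ?_⟩
  rw [mul_apply_eq_vecMul]
  rcases Nat.lt_succ_iff_lt_or_eq.mp hi with hi | hi
  · rw [hstd i hi, hfix _ (by simp [stdRows_apply]; omega)
      (fun l hl => by simp [stdRows_apply]; omega)]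
  · obtain rfl : i = ⟨s, hsn⟩ := Fin.ext hi
    rw [hrow, stdRows_row]

lemma IsOUm.apply_eq_one_of_firstRowsStd (hV : IsOUm V) {t : ℕ}
    (hstd : FirstRowsStd (2 * t + 1) V) (htn : t < n) (htm : t < m) :
    V ⟨2 * t + 1, by omega⟩ ⟨2 * t + 1, by omega⟩ = 1 := by
  have := hV.row_dotProduct_row ⟨2 * t + 1, by omega⟩ ⟨2 * t, by omega⟩
  rw [hstd ⟨2 * t, by omega⟩ (by simp), stdRows_row (by simp; omega), phiMat_mulVec_single,
    dotProduct_single_one,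
    phiMat_apply, if_pos (Fin.ext (by simp [sigmaPerm_val]))] at this
  convert this using 2
  exact Fin.ext (by simp [sigmaPerm_val])

lemma IsOUm.exists_firstRowsStd_add_two [IsLocalRing R] (h2 : IsUnit (2 : R)) (hV : IsOUm V)
    {t : ℕ} (hstd : FirstRowsStd (2 * t) V) (htn : t < n) (hnm : n < m) :
    ∃ ε ∈ EOGroup R m, FirstRowsStd (2 * t + 2) (V * ε) := by
  obtain ⟨ε₁, hε₁, hstd₁, hone₁⟩ := hV.exists_mem_EOGroup_apply_eq_one hstd htn hnm
  have hV₁ := hV.mul_of_mem hε₁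
  obtain ⟨ε₂, hε₂, hstd₂⟩ :=
    hV₁.exists_firstRowsStd_succ h2 (t := t) le_rfl (by omega) _ _ hstd₁ hone₁
  have hV₂ := hV₁.mul_of_mem hε₂
  obtain ⟨ε₃, hε₃, hstd₃⟩ := hV₂.exists_firstRowsStd_succ h2 (t := t) (s := 2 * t + 1) (by omega)
    (by omega) _ _ hstd₂ (hV₂.apply_eq_one_of_firstRowsStd hstd₂ htn (by omega))
  refine ⟨ε₁ * ε₂ * ε₃, mul_mem (mul_mem hε₁ hε₂) hε₃, ?_⟩
  simpa only [Matrix.mul_assoc] using hstd₃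

theorem IsOUm.exists_mul_eq_stdRows [IsLocalRing R] (h2 : IsUnit (2 : R)) (hnm : n < m)
    (hV : IsOUm V) : ∃ ε ∈ EOGroup R m, V * ε = stdRows R n m := by
  suffices ∀ t ≤ n, ∃ ε ∈ EOGroup R m, FirstRowsStd (2 * t) (V * ε) by
    obtain ⟨ε, hε, hstd⟩ := this n le_rfl
    exact ⟨ε, hε, funext fun s => hstd s s.isLt⟩
  intro t
  induction t with
  | zero => exact fun _ => ⟨1, one_mem _, fun s hs => absurd hs (by omega)⟩
  | succ t ih =>
    intro ht
    obtain ⟨ε, hε, hstd⟩ := ih (by omega)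
    obtain ⟨ε', hε', hstd'⟩ := (hV.mul_of_mem hε).exists_firstRowsStd_add_two h2 hstd (by omega) hnm
    rw [Matrix.mul_assoc] at hstd'
    exact ⟨ε * ε', mul_mem hε hε', hstd'⟩

end Reduction

lemma stdRows_map {R S : Type*} [CommRing R] [CommRing S] (f : R →+* S) {n m : ℕ} :
    (stdRows R n m).map f = stdRows S n m := by
  ext i j; simp [stdRows, apply_ite f]

lemma stdRows_mul_matPerpId {R : Type*} [CommRing R] {n m : ℕ} (h : n ≤ m)
    (γ : Matrix (Fin (2 * n)) (Fin (2 * n)) R) :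
    stdRows R n m * matPerpId (2 * m) γ = γ * stdRows R n m := by
  ext i j
  rw [mul_apply_eq_vecMul, stdRows_row (by omega), single_one_vecMul, row_apply, mul_apply]
  by_cases hj : (j : ℕ) < 2 * n
  · rw [matPerpId_apply_of_lt γ (N := 2 * m) (i := ⟨i, by omega⟩) i.isLt hj,
      Finset.sum_eq_single ⟨j, hj⟩]
    · simp [stdRows]
    · intro b _ hb; simp [stdRows, Fin.ext_iff] at hb ⊢; omega
    · simp
  · rw [matPerpId_apply_of_le _ (.inr (not_lt.mp hj)), if_neg (Fin.ne_of_val_ne (by simp; omega))]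
    exact (Finset.sum_eq_zero fun s _ => by simp [stdRows]; omega).symm

lemma map_C_map_eval_zero {R : Type*} [CommRing R] {ι κ : Type*} (A : Matrix ι κ R) :
    (A.map C).map (eval 0) = A := by
  ext; simp

lemma mul_eq_mul_conj_matPerpId {R : Type*} [CommRing R] {n m : ℕ} (hnm : n ≤ m)
    (γ : Matrix (Fin (2 * n)) (Fin (2 * n)) R) {W : Matrix (Fin (2 * n)) (Fin (2 * m)) R}
    {ε : Matrix (Fin (2 * m)) (Fin (2 * m)) R} (hε : ε * ε⁻¹ = 1) (hWε : W * ε = stdRows R n m) :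
    γ * W = W * (ε * matPerpId (2 * m) γ * ε⁻¹) :=
  calc γ * W = γ * (W * ε) * ε⁻¹ := by rw [Matrix.mul_assoc, Matrix.mul_assoc, hε, Matrix.mul_one]
    _ = W * ε * matPerpId (2 * m) γ * ε⁻¹ := by rw [hWε, stdRows_mul_matPerpId hnm]
    _ = W * (ε * matPerpId (2 * m) γ * ε⁻¹) := by simp only [Matrix.mul_assoc]

theorem stmt13_general {R : Type*} [CommRing R] [IsLocalRing R]
    (h2 : IsUnit (2 : R)) {n m : ℕ} (hnm : n + 2 ≤ m)
    (V : Matrix (Fin (2 * n)) (Fin (2 * m)) R)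
    (hVinv : ∃ B : Matrix (Fin (2 * m)) (Fin (2 * n)) R, V * B = 1)
    (hVorth : V * phiMat R m * Vᵀ = phiMat R n)
    (γ : Matrix (Fin (2 * n)) (Fin (2 * n)) (Polynomial R))
    (hγorth : IsOrthogonalMat γ) (hγdet : γ.det = 1)
    (hγ0 : γ.map (Polynomial.eval 0) = 1) :
    ∃ σ : Matrix (Fin (2 * m)) (Fin (2 * m)) (Polynomial R),
      IsOrthogonalMat σ ∧ σ.det = 1 ∧
      σ.map (Polynomial.eval 0) = 1 ∧
      σ⁻¹ * matPerpId (2 * m) γ ∈ EOGroup (Polynomial R) m ∧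
      γ * V.map Polynomial.C = V.map Polynomial.C * σ := by
  obtain ⟨ε, hε, hVε⟩ := IsOUm.exists_mul_eq_stdRows h2 (by omega) ⟨hVinv, hVorth⟩
  have hεC := EOGroup.map_mem C hε
  have hεC' := EOGroup.isOrthogonalMat hεC
  refine ⟨ε.map C * matPerpId (2 * m) γ * (ε.map C)⁻¹,
    (hεC'.mul (hγorth.matPerpId (by omega))).mul hεC'.inv, ?_, ?_,
    inv_conj_matPerpId_mul_mem (by simpa only [map_ofNat] using h2.map C) hnm hγorth hεC,
    mul_eq_mul_conj_matPerpId (by omega) γ hεC'.mul_inv_cancel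
      (by rw [← Matrix.map_mul, hVε, stdRows_map])⟩
  · rw [det_mul, det_mul, mul_right_comm, ← det_mul, hεC'.mul_inv_cancel, det_one, one_mul,
      det_matPerpId (by omega), hγdet]
  · rw [(EOGroup.isOrthogonalMat hε).map_inv, ← coe_evalRingHom, Matrix.map_mul, Matrix.map_mul,
      matPerpId_map, coe_evalRingHom, hγ0, map_C_map_eval_zero, map_C_map_eval_zero,
      matPerpId_one (by omega), Matrix.mul_one, (EOGroup.isOrthogonalMat hε).mul_inv_cancel]

/-- local version of the generalised homotopy principle, orthogonal case. -/
theorem stmt13 {R : Type*} [CommRing R] [Nontrivial R] [IsLocalRing R]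
    (h2 : IsUnit (2 : R)) {n m : ℕ} (hn : 2 ≤ n) (hnm : n + 2 ≤ m)
    (V : Matrix (Fin (2 * n)) (Fin (2 * m)) R)
    (hVinv : ∃ B : Matrix (Fin (2 * m)) (Fin (2 * n)) R, V * B = 1)
    (hVorth : V * phiMat R m * Vᵀ = phiMat R n)
    (δ : Matrix (Fin (2 * n)) (Fin (2 * n)) R) (hδ : IsOrthogonalMat δ) (hδdet : δ.det = 1)
    (γ : Matrix (Fin (2 * n)) (Fin (2 * n)) (Polynomial R))
    (hγorth : IsOrthogonalMat γ) (hγdet : γ.det = 1)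
    (hγ0 : γ.map (Polynomial.eval 0) = 1) (hγ1 : γ.map (Polynomial.eval 1) = δ) :
    ∃ σ : Matrix (Fin (2 * m)) (Fin (2 * m)) (Polynomial R),
      IsOrthogonalMat σ ∧ σ.det = 1 ∧
      σ.map (Polynomial.eval 0) = 1 ∧
      σ⁻¹ * matPerpId (2 * m) γ ∈ EOGroup (Polynomial R) m ∧
      γ * V.map Polynomial.C = V.map Polynomial.C * σ :=
  stmt13_general h2 hnm V hVinv hVorth γ hγorth hγdet hγ0
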